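/- Let w ∈ W and suppose the simple reflection s_i occurs in some reduced expression of w. Then for every λ ∈ V with ⟨λ, α_j∨⟩ > 0 for all j ∈ {1,…,l}, writing λ − w(λ) = Σ_{j=1}^l μ_j α_j in the basis of simple roots, one has μ_j ≥ 0 for all j and μ_i > 0. -/

import Mathlib

open scoped RealInnerProductSpace

noncomputable section

/-- The pairing `⟨v, a∨⟩ = 2⟪v,a⟫/⟪a,a⟫` of `v` against the coroot of `a`. -/
def copair {V : Type*} [NormedAddCommGroup V] [InnerProductSpace ℝ V] (v a : V) : ℝ :=
  2 * ⟪v, a⟫ / ⟪a, a⟫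

/-- The orthogonal reflection `s_a` in the hyperplane orthogonal to `a`,
as a linear isometry of `V`. -/
def sRefl {V : Type*} [NormedAddCommGroup V] [InnerProductSpace ℝ V] [FiniteDimensional ℝ V]
    (a : V) : V ≃ₗᵢ[ℝ] V :=
  Submodule.reflection (ℝ ∙ a)ᗮ

/-- A finite crystallographic reduced root system `Φ` spanning a finite-dimensional real inner
product space `V`, together with a choice of positive roots `pos`, simple roots `sroot`,
and fundamental weights `fw`. -/
structure RootSystemCtx (V : Type*) [NormedAddCommGroup V] [InnerProductSpace ℝ V]
    [FiniteDimensional ℝ V] where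
  l : ℕ
  Φ : Finset V
  pos : Finset V
  sroot : Fin l → V
  fw : Fin l → V
  nonzero : ∀ a ∈ Φ, a ≠ (0 : V)
  span_top : Submodule.span ℝ (Φ : Set V) = ⊤
  reduced : ∀ a ∈ Φ, ∀ t : ℝ, t • a ∈ Φ → t = 1 ∨ t = -1
  refl_mem : ∀ a ∈ Φ, ∀ b ∈ Φ, sRefl a b ∈ Φ
  crystal : ∀ a ∈ Φ, ∀ b ∈ Φ, ∃ n : ℤ, copair b a = (n : ℝ)
  pos_subset : pos ⊆ Φ
  mem_pos_or : ∀ a ∈ Φ, (a ∈ pos ∧ -a ∉ pos) ∨ (a ∉ pos ∧ -a ∈ pos)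
  sroot_mem : ∀ i, sroot i ∈ pos
  sroot_indep : LinearIndependent ℝ sroot
  pos_nat_comb : ∀ a ∈ pos, ∃ c : Fin l → ℕ, a = ∑ i, (c i : ℝ) • sroot i
  fw_pairing : ∀ i j, copair (fw i) (sroot j) = if i = j then 1 else 0

namespace RootSystemCtx

variable {V : Type*} [NormedAddCommGroup V] [InnerProductSpace ℝ V] [FiniteDimensional ℝ V]
variable (R : RootSystemCtx V)

/-- The half sum of the positive roots, `ρ = Σ_i ϖ_i`. -/
def rho : V := ∑ i, R.fw i

/-- The Weyl group `W`, the subgroup of the isometry group of `V` generated by the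
reflections in the roots. -/
def weylGroup : Subgroup (V ≃ₗᵢ[ℝ] V) :=
  Subgroup.closure {g | ∃ a ∈ R.Φ, g = sRefl a}

/-- `γ` is an expression of `w` as a product of simple reflections. -/
def IsExpression (w : V ≃ₗᵢ[ℝ] V) (γ : List (Fin R.l)) : Prop :=
  w = (γ.map fun i => sRefl (R.sroot i)).prod

/-- `γ` is a reduced expression of `w`: an expression of minimal possible length. -/
def IsReducedExpression (w : V ≃ₗᵢ[ℝ] V) (γ : List (Fin R.l)) : Prop :=
  R.IsExpression w γ ∧ ∀ γ' : List (Fin R.l), R.IsExpression w γ' → γ.length ≤ γ'.length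

/-- A weight is dominant if it pairs nonnegatively with every simple coroot. -/
def IsDominant (v : V) : Prop := ∀ i, 0 ≤ copair v (R.sroot i)

/-- `d` is the dominant representative `{v}` of the Weyl group orbit of `v`. -/
def IsDomRep (v d : V) : Prop := R.IsDominant d ∧ ∃ w ∈ R.weylGroup, w v = d

end RootSystemCtx

/-! Induct along a reduced word `w = w' s_j`. Then
`λ - wλ = (λ - w'λ) + ⟨λ, α_j∨⟩ w'(α_j)`, and `w'(α_j)` is a positive root, since otherwise the
deletion argument would shorten the word. So the simple-root coordinates of `λ - wλ` never
decrease along the word, and the `α_i`-coordinate becomes positive when `s_i` first appears: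
at that point `w'` does not involve `s_i`, so `w'(α_i)` has `α_i`-coordinate `1`. -/

section Reflections

variable {V : Type*} [NormedAddCommGroup V] [InnerProductSpace ℝ V]

lemma copair_map (w : V ≃ₗᵢ[ℝ] V) (x a : V) : copair (w x) (w a) = copair x a := by
  simp [copair, w.inner_map_map]

variable [FiniteDimensional ℝ V]

lemma sRefl_apply (a x : V) : sRefl a x = x - copair x a • a := by
  rw [sRefl, Submodule.reflection_orthogonal_apply, Submodule.reflection_singleton_apply, copair]
  simp only [RCLike.ofReal_real_eq_id, id_eq]
  rw [real_inner_comm x a, ← real_inner_self_eq_norm_sq, mul_div_assoc]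
  module

lemma sRefl_map (w : V ≃ₗᵢ[ℝ] V) (a x : V) : sRefl (w a) (w x) = w (sRefl a x) := by
  rw [sRefl_apply, sRefl_apply, copair_map, map_sub, map_smul]

lemma sRefl_mul_self (a : V) : sRefl a * sRefl a = 1 := by
  ext x
  simp only [LinearIsometryEquiv.coe_mul, Function.comp_apply, LinearIsometryEquiv.coe_one, id_eq]
  exact Submodule.reflection_reflection _ x

end Reflections

namespace RootSystemCtx

variable {V : Type*} [NormedAddCommGroup V] [InnerProductSpace ℝ V] [FiniteDimensional ℝ V]
variable (R : RootSystemCtx V)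

lemma sroot_mem_Φ (j : Fin R.l) : R.sroot j ∈ R.Φ := R.pos_subset (R.sroot_mem j)

lemma mem_span_sroot_of_mem_pos {a : V} (ha : a ∈ R.pos) :
    a ∈ Submodule.span ℝ (Set.range R.sroot) := by
  obtain ⟨c, rfl⟩ := R.pos_nat_comb a ha
  exact Submodule.sum_mem _ fun i _ =>
    Submodule.smul_mem _ _ (Submodule.subset_span (Set.mem_range_self i))

def simpleBasis : Module.Basis (Fin R.l) ℝ V :=
  Module.Basis.mk R.sroot_indep <| by
    rw [← R.span_top]
    refine Submodule.span_le.mpr fun a ha => ?_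
    rcases R.mem_pos_or a ha with ⟨h, -⟩ | ⟨-, h⟩
    · exact R.mem_span_sroot_of_mem_pos h
    · simpa using Submodule.neg_mem _ (R.mem_span_sroot_of_mem_pos h)

@[simp]
lemma coe_simpleBasis : ⇑R.simpleBasis = R.sroot := Module.Basis.coe_mk _ _

lemma simpleBasis_repr_sum (μ : Fin R.l → ℝ) :
    ⇑(R.simpleBasis.repr (∑ j, μ j • R.sroot j)) = μ := by
  rw [← R.coe_simpleBasis]
  exact R.simpleBasis.repr_sum_self μ

lemma simpleBasis_repr_sroot (j m : Fin R.l) :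
    R.simpleBasis.repr (R.sroot j) m = if j = m then 1 else 0 := by
  rw [← R.coe_simpleBasis, Module.Basis.repr_self, Finsupp.single_apply]

lemma simpleBasis_repr_nonneg_of_mem_pos {a : V} (ha : a ∈ R.pos) (m : Fin R.l) :
    0 ≤ R.simpleBasis.repr a m := by
  obtain ⟨c, rfl⟩ := R.pos_nat_comb a ha
  rw [simpleBasis_repr_sum]
  exact Nat.cast_nonneg _

lemma mem_pos_of_simpleBasis_repr_pos {a : V} (ha : a ∈ R.Φ) {m : Fin R.l}
    (h : 0 < R.simpleBasis.repr a m) : a ∈ R.pos := by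
  rcases R.mem_pos_or a ha with ⟨hp, -⟩ | ⟨-, hn⟩
  · exact hp
  · have := R.simpleBasis_repr_nonneg_of_mem_pos hn m
    simp only [map_neg, Finsupp.coe_neg, Pi.neg_apply] at this
    linarith

/-- Reducedness enters here: `c • α_p` is a root only for `c = ±1`. -/
lemma eq_sroot_of_mem_pos_of_simpleBasis_repr_eq_zero {b : V} (hb : b ∈ R.pos) {p : Fin R.l}
    (hsupp : ∀ m, m ≠ p → R.simpleBasis.repr b m = 0) : b = R.sroot p := by
  set c := R.simpleBasis.repr b p
  have hb_eq : b = c • R.sroot p := by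
    conv_lhs => rw [← R.simpleBasis.sum_repr b]
    rw [Finset.sum_eq_single p (fun m _ hm => by rw [hsupp m hm, zero_smul]) (by simp),
      coe_simpleBasis]
  have hc : c = 1 ∨ c = -1 := R.reduced _ (R.sroot_mem_Φ p) c (hb_eq ▸ R.pos_subset hb)
  have hc_nonneg : 0 ≤ c := R.simpleBasis_repr_nonneg_of_mem_pos hb p
  rcases hc with hc | hc
  · rw [hb_eq, hc, one_smul]
  · linarith

lemma sRefl_sroot_mem_pos {b : V} (hb : b ∈ R.pos) {p : Fin R.l} (hne : b ≠ R.sroot p) :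
    sRefl (R.sroot p) b ∈ R.pos := by
  obtain ⟨m, hmp, hbm⟩ : ∃ m, m ≠ p ∧ R.simpleBasis.repr b m ≠ 0 := by
    by_contra! h
    exact hne (R.eq_sroot_of_mem_pos_of_simpleBasis_repr_eq_zero hb h)
  have hbm_pos : 0 < R.simpleBasis.repr b m :=
    (R.simpleBasis_repr_nonneg_of_mem_pos hb m).lt_of_ne' hbm
  refine R.mem_pos_of_simpleBasis_repr_pos (R.refl_mem _ (R.sroot_mem_Φ p) _ (R.pos_subset hb))
    (m := m) ?_
  rw [sRefl_apply, map_sub, map_smul]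
  simpa [R.simpleBasis_repr_sroot, Ne.symm hmp] using hbm_pos

def simpleReflProd (γ : List (Fin R.l)) : V ≃ₗᵢ[ℝ] V := (γ.map fun i => sRefl (R.sroot i)).prod

lemma simpleReflProd_cons (p : Fin R.l) (γ : List (Fin R.l)) :
    R.simpleReflProd (p :: γ) = sRefl (R.sroot p) * R.simpleReflProd γ := by
  simp [simpleReflProd]

lemma simpleReflProd_append_singleton (γ : List (Fin R.l)) (j : Fin R.l) :
    R.simpleReflProd (γ ++ [j]) = R.simpleReflProd γ * sRefl (R.sroot j) := by
  simp [simpleReflProd]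

lemma simpleBasis_repr_simpleReflProd_sub_self_eq_zero {γ : List (Fin R.l)} {m : Fin R.l}
    (hm : m ∉ γ) (v : V) : R.simpleBasis.repr (R.simpleReflProd γ v - v) m = 0 := by
  induction γ with
  | nil => simp [simpleReflProd]
  | cons p γ ih =>
    rw [List.mem_cons, not_or] at hm
    have hstep : R.simpleReflProd (p :: γ) v - v =
        (R.simpleReflProd γ v - v) - copair (R.simpleReflProd γ v) (R.sroot p) • R.sroot p := by
      rw [simpleReflProd_cons, LinearIsometryEquiv.coe_mul, Function.comp_apply, sRefl_apply]
      abel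
    rw [hstep, map_sub, map_smul, Finsupp.coe_sub, Pi.sub_apply, ih hm.2, Finsupp.coe_smul,
      Pi.smul_apply, simpleBasis_repr_sroot, if_neg (Ne.symm hm.1), smul_zero, sub_zero]

/-- Deletion: if `w(α_j) < 0` for `w = s_{γ_1} ⋯ s_{γ_n}`, then some `s_{γ_k}` maps the positive
root `s_{γ_{k+1}} ⋯ s_{γ_n}(α_j)` to a negative one, so that root is `α_{γ_k}`, and deleting `γ_k`
from the word gives `w s_j`. -/
lemma exists_shorter_of_not_mem_pos {γ : List (Fin R.l)} {j : Fin R.l}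
    (h : R.simpleReflProd γ (R.sroot j) ∉ R.pos) :
    ∃ δ : List (Fin R.l), R.simpleReflProd δ = R.simpleReflProd γ * sRefl (R.sroot j) ∧
      δ.length < γ.length := by
  induction γ with
  | nil => exact absurd (R.sroot_mem j) (by simpa [simpleReflProd] using h)
  | cons p γ ih =>
    by_cases hγ : R.simpleReflProd γ (R.sroot j) ∈ R.pos
    · have heq : R.simpleReflProd γ (R.sroot j) = R.sroot p := by
        by_contra hne
        apply h
        rw [simpleReflProd_cons, LinearIsometryEquiv.coe_mul, Function.comp_apply]
        exact R.sRefl_sroot_mem_pos hγ hne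
      have hconj : sRefl (R.sroot p) * R.simpleReflProd γ =
          R.simpleReflProd γ * sRefl (R.sroot j) := by
        ext x
        simp only [LinearIsometryEquiv.coe_mul, Function.comp_apply]
        rw [← heq, sRefl_map]
      refine ⟨γ, ?_, by simp⟩
      rw [simpleReflProd_cons, mul_assoc, ← hconj, ← mul_assoc, sRefl_mul_self, one_mul]
    · obtain ⟨δ, hδ, hlen⟩ := ih hγ
      refine ⟨p :: δ, ?_, by simpa using hlen⟩
      rw [simpleReflProd_cons, simpleReflProd_cons, hδ, mul_assoc]

lemma IsReducedExpression.of_append_singleton {γ : List (Fin R.l)} {j : Fin R.l}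
    (hred : R.IsReducedExpression (R.simpleReflProd (γ ++ [j])) (γ ++ [j])) :
    R.IsReducedExpression (R.simpleReflProd γ) γ := by
  refine ⟨rfl, fun δ (hδ : R.simpleReflProd γ = R.simpleReflProd δ) => ?_⟩
  have := hred.2 (δ ++ [j]) <| by
    show _ = R.simpleReflProd (δ ++ [j])
    rw [simpleReflProd_append_singleton, simpleReflProd_append_singleton, hδ]
  simpa using this

lemma simpleReflProd_sroot_mem_pos {γ : List (Fin R.l)} {j : Fin R.l}
    (hred : R.IsReducedExpression (R.simpleReflProd (γ ++ [j])) (γ ++ [j])) :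
    R.simpleReflProd γ (R.sroot j) ∈ R.pos := by
  by_contra h
  obtain ⟨δ, hδ, hlen⟩ := R.exists_shorter_of_not_mem_pos h
  have := hred.2 δ <| by
    show _ = R.simpleReflProd δ
    rw [hδ, simpleReflProd_append_singleton]
  simp only [List.length_append, List.length_singleton] at this
  omega

lemma sub_simpleReflProd_append_singleton (γ : List (Fin R.l)) (j : Fin R.l) (v : V) :
    v - R.simpleReflProd (γ ++ [j]) v =
      (v - R.simpleReflProd γ v) + copair v (R.sroot j) • R.simpleReflProd γ (R.sroot j) := by
  rw [simpleReflProd_append_singleton, LinearIsometryEquiv.coe_mul, Function.comp_apply,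
    sRefl_apply, map_sub, map_smul]
  abel

lemma simpleBasis_repr_sub_simpleReflProd_nonneg {γ : List (Fin R.l)}
    (hred : R.IsReducedExpression (R.simpleReflProd γ) γ) {v : V} (hv : R.IsDominant v)
    (m : Fin R.l) : 0 ≤ R.simpleBasis.repr (v - R.simpleReflProd γ v) m := by
  induction γ using List.reverseRecOn with
  | nil => simp [simpleReflProd]
  | append_singleton γ j ih =>
    have := ih hred.of_append_singleton
    have := R.simpleBasis_repr_nonneg_of_mem_pos (R.simpleReflProd_sroot_mem_pos hred) m
    have := hv j
    rw [sub_simpleReflProd_append_singleton, map_add, map_smul]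
    simp only [Finsupp.coe_add, Finsupp.coe_smul, Pi.add_apply, Pi.smul_apply, smul_eq_mul]
    positivity

lemma simpleBasis_repr_sub_simpleReflProd_pos {γ : List (Fin R.l)}
    (hred : R.IsReducedExpression (R.simpleReflProd γ) γ) {v : V} (hv : R.IsDominant v)
    {i : Fin R.l} (hvi : 0 < copair v (R.sroot i)) (hi : i ∈ γ) :
    0 < R.simpleBasis.repr (v - R.simpleReflProd γ v) i := by
  induction γ using List.reverseRecOn with
  | nil => simp at hi
  | append_singleton γ j ih =>
    have hpos := R.simpleReflProd_sroot_mem_pos hred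
    rw [sub_simpleReflProd_append_singleton, map_add, map_smul]
    simp only [Finsupp.coe_add, Finsupp.coe_smul, Pi.add_apply, Pi.smul_apply, smul_eq_mul]
    by_cases hiγ : i ∈ γ
    · have := ih hred.of_append_singleton hiγ
      have := R.simpleBasis_repr_nonneg_of_mem_pos hpos i
      have := hv j
      positivity
    · obtain rfl : i = j := by simpa [hiγ] using hi
      have hcoord : R.simpleBasis.repr (R.simpleReflProd γ (R.sroot i)) i = 1 := by
        have := R.simpleBasis_repr_simpleReflProd_sub_self_eq_zero hiγ (R.sroot i)
        rwa [map_sub, Finsupp.coe_sub, Pi.sub_apply, simpleBasis_repr_sroot, if_pos rfl,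
          sub_eq_zero] at this
      have := R.simpleBasis_repr_sub_simpleReflProd_nonneg hred.of_append_singleton hv i
      rw [hcoord, mul_one]
      positivity

end RootSystemCtx

theorem statement2_general {V : Type*} [NormedAddCommGroup V] [InnerProductSpace ℝ V]
    [FiniteDimensional ℝ V] (R : RootSystemCtx V)
    (w : V ≃ₗᵢ[ℝ] V) (i : Fin R.l)
    (hocc : ∃ γ : List (Fin R.l), R.IsReducedExpression w γ ∧ i ∈ γ)
    (lam : V) (hlam : ∀ j, 0 < copair lam (R.sroot j))
    (μ : Fin R.l → ℝ) (hμ : lam - w lam = ∑ j, μ j • R.sroot j) :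
    (∀ j, 0 ≤ μ j) ∧ 0 < μ i := by
  obtain ⟨γ, hred, hi⟩ := hocc
  obtain rfl : w = R.simpleReflProd γ := hred.1
  have hdom : R.IsDominant lam := fun j => (hlam j).le
  have hμ_eq : ∀ m, μ m = R.simpleBasis.repr (lam - R.simpleReflProd γ lam) m := by
    rw [hμ, R.simpleBasis_repr_sum]
    exact fun _ => rfl
  simp only [hμ_eq]
  exact ⟨R.simpleBasis_repr_sub_simpleReflProd_nonneg hred hdom,
    R.simpleBasis_repr_sub_simpleReflProd_pos hred hdom (hlam i) hi⟩

/-- If the simple reflection `s_i` occurs in some reduced expression of `w`,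
then for every `λ` with `⟨λ, α_j∨⟩ > 0` for all `j`, writing `λ − w(λ) = Σ_j μ_j α_j` in the
basis of simple roots, one has `μ_j ≥ 0` for all `j` and `μ_i > 0`. -/
theorem statement2 {V : Type*} [NormedAddCommGroup V] [InnerProductSpace ℝ V]
    [FiniteDimensional ℝ V] (R : RootSystemCtx V)
    (w : V ≃ₗᵢ[ℝ] V) (hw : w ∈ R.weylGroup) (i : Fin R.l)
    (hocc : ∃ γ : List (Fin R.l), R.IsReducedExpression w γ ∧ i ∈ γ)
    (lam : V) (hlam : ∀ j, 0 < copair lam (R.sroot j))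
    (μ : Fin R.l → ℝ) (hμ : lam - w lam = ∑ j, μ j • R.sroot j) :
    (∀ j, 0 ≤ μ j) ∧ 0 < μ i :=
  statement2_general R w i hocc lam hlam μ hμ
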